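/- Degree elevation preserves the Pickands coefficient constraints: if β_0,…,β_k satisfy β_0 = β_k = 1, β_j ≤ 1 for all j, β_1 = (k−1+2p_0)/k, β_{k-1} = (k−1+2p_1)/k, and β_{j+2} − 2β_{j+1} + β_j ≥ 0 for all j, then the degree-(k+1) coefficients β*_j = β_j(k+1−j)/(k+1) + β_{j-1}·j/(k+1), j = 0,…,k+1 (with β_{-1} and β_{k+1} irrelevant since the weights vanish), satisfy β*_0 = β*_{k+1} = 1, β*_1 = (k+2p_0)/(k+1), and β*_k = (k+2p_1)/(k+1), and Σ_{j=0}^{k+1} β*_j b_j(t;k+1) = Σ_{j=0}^{k} β_j b_j(t;k) for all t in [0,1]. -/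

import Mathlib

/-- Bernstein basis polynomial `b_j(x;k)`. -/
noncomputable def bern (k j : ℕ) (x : ℝ) : ℝ :=
  (Nat.choose k j : ℝ) * x ^ j * (1 - x) ^ (k - j)

lemma bern_elev (k j : ℕ) (hj : j ≤ k) (t : ℝ) :
    (((k : ℝ) + 1 - j) / ((k : ℝ) + 1)) * bern (k + 1) j t
      + (((j : ℝ) + 1) / ((k : ℝ) + 1)) * bern (k + 1) (j + 1) t = bern k j t := by
  have h1 : ((k : ℝ) + 1 - j) * (Nat.choose (k + 1) j : ℝ)
      = ((k : ℝ) + 1) * (Nat.choose k j : ℝ) := by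
    have := Nat.choose_mul_succ_eq k j
    have hc : ((k + 1 - j : ℕ) : ℝ) = (k : ℝ) + 1 - j := by
      push_cast [Nat.cast_sub (by omega : j ≤ k + 1)]; ring
    have := congrArg (Nat.cast : ℕ → ℝ) this
    push_cast at this
    rw [hc] at this
    linarith
  have h2 : ((j : ℝ) + 1) * (Nat.choose (k + 1) (j + 1) : ℝ)
      = ((k : ℝ) + 1) * (Nat.choose k j : ℝ) := by
    have := Nat.add_one_mul_choose_eq k j
    have := congrArg (Nat.cast : ℕ → ℝ) this
    push_cast at this
    linarith
  have hsub1 : k + 1 - j = (k - j) + 1 := by omega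
  have hsub2 : k + 1 - (j + 1) = k - j := by omega
  have hk1 : ((k : ℝ) + 1) ≠ 0 := by positivity
  unfold bern
  rw [hsub1, hsub2]
  field_simp
  linear_combination ((1 - t) * t ^ j * (1 - t) ^ (k - j)) * h1
    + (t ^ (j + 1) * (1 - t) ^ (k - j)) * h2

theorem degree_elevation_pickands (k : ℕ) (hk : 2 ≤ k)
    (β : ℕ → ℝ) (p₀ p₁ : ℝ)
    (hp₀ : p₀ ∈ Set.Icc (0 : ℝ) (1 / 2)) (hp₁ : p₁ ∈ Set.Icc (0 : ℝ) (1 / 2))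
    (hβ0 : β 0 = 1) (hβk : β k = 1) (hβle : ∀ j ≤ k, β j ≤ 1)
    (hβ1 : β 1 = ((k : ℝ) - 1 + 2 * p₀) / k)
    (hβk1 : β (k - 1) = ((k : ℝ) - 1 + 2 * p₁) / k)
    (hconv : ∀ j ≤ k - 2, β (j + 2) - 2 * β (j + 1) + β j ≥ 0)
    (βs : ℕ → ℝ)
    (hβs : ∀ j ≤ k + 1,
      βs j = β j * (((k : ℝ) + 1 - (j : ℝ)) / ((k : ℝ) + 1))
           + β (j - 1) * ((j : ℝ) / ((k : ℝ) + 1))) :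
    βs 0 = 1 ∧ βs (k + 1) = 1 ∧
    βs 1 = ((k : ℝ) + 2 * p₀) / ((k : ℝ) + 1) ∧
    βs k = ((k : ℝ) + 2 * p₁) / ((k : ℝ) + 1) ∧
    ∀ t ∈ Set.Icc (0 : ℝ) 1,
      ∑ j ∈ Finset.range (k + 2), βs j * bern (k + 1) j t =
        ∑ j ∈ Finset.range (k + 1), β j * bern k j t := by
  have hk0 : (k : ℝ) ≠ 0 := by positivity
  have hk1 : ((k : ℝ) + 1) ≠ 0 := by positivity
  refine ⟨?_, ?_, ?_, ?_, ?_⟩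
  · rw [hβs 0 (by omega)]
    simp [hβ0]
    field_simp
    exact hk1
  · rw [hβs (k + 1) (by omega)]
    simp [hβk]
    push_cast
    field_simp
    exact hk1
  · rw [hβs 1 (by omega)]
    simp [hβ0, hβ1]
    field_simp
    ring
  · rw [hβs k (by omega)]
    rw [hβk, hβk1]
    field_simp
    ring
  · intro t _
    have key : ∀ j ∈ Finset.range (k + 2),
        βs j * bern (k + 1) j t
          = β j * (((k : ℝ) + 1 - j) / ((k : ℝ) + 1)) * bern (k + 1) j t
            + β (j - 1) * ((j : ℝ) / ((k : ℝ) + 1)) * bern (k + 1) j t := by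
      intro j hj
      rw [hβs j (by simpa using Nat.lt_succ_iff.mp (Finset.mem_range.mp hj))]
      ring
    rw [Finset.sum_congr rfl key, Finset.sum_add_distrib]
    have e1 : ∑ j ∈ Finset.range (k + 2),
        β j * (((k : ℝ) + 1 - j) / ((k : ℝ) + 1)) * bern (k + 1) j t
        = ∑ j ∈ Finset.range (k + 1),
          β j * (((k : ℝ) + 1 - j) / ((k : ℝ) + 1)) * bern (k + 1) j t := by
      rw [Finset.sum_range_succ]
      push_cast
      ring_nf
      exact Finset.sum_congr rfl (fun x _ => by ring)
    have e2 : ∑ j ∈ Finset.range (k + 2),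
        β (j - 1) * ((j : ℝ) / ((k : ℝ) + 1)) * bern (k + 1) j t
        = ∑ j ∈ Finset.range (k + 1),
          β j * (((j : ℝ) + 1) / ((k : ℝ) + 1)) * bern (k + 1) (j + 1) t := by
      rw [Finset.sum_range_succ' _ (k + 1)]
      simp
    rw [e1, e2, ← Finset.sum_add_distrib]
    apply Finset.sum_congr rfl
    intro j hj
    have hjk : j ≤ k := Nat.lt_succ_iff.mp (Finset.mem_range.mp hj)
    have := bern_elev k j hjk t
    linear_combination β j * this
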